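/- Let c : [0,L] → 𝕊² be a unit-speed convex spherical curve (geodesic curvature k(s) ≥ 0, embedded) with cone 𝒞(c) = {t·c(s) : t > 0}. Let P be an affine plane not through the origin meeting every ray of the cone, giving the plane curve P_c(s) = R(s)c(s) ∈ P. Then P_c is a convex plane curve: it lies on one side of each of its tangent lines in P. -/

import Mathlib

open scoped RealInnerProductSpace

/-- The cross product in `ℝ³`. -/
noncomputable def cross3 (u v : EuclideanSpace ℝ (Fin 3)) : EuclideanSpace ℝ (Fin 3) :=
  (WithLp.equiv 2 _).symm
    ![u 1 * v 2 - u 2 * v 1, u 2 * v 0 - u 0 * v 2, u 0 * v 1 - u 1 * v 0]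

lemma cross3_inner_left (u v : EuclideanSpace ℝ (Fin 3)) : ⟪cross3 u v, u⟫ = 0 := by
  simp [cross3, PiLp.inner_apply, Fin.sum_univ_three]
  ring

lemma cross3_inner_right (u v : EuclideanSpace ℝ (Fin 3)) : ⟪cross3 u v, v⟫ = 0 := by
  simp [cross3, PiLp.inner_apply, Fin.sum_univ_three]
  ring

lemma cross3_lagrange (u v : EuclideanSpace ℝ (Fin 3)) :
    ⟪cross3 u v, cross3 u v⟫ = ⟪u, u⟫ * ⟪v, v⟫ - ⟪u, v⟫ ^ 2 := by
  simp only [PiLp.inner_apply]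
  simp [cross3, Fin.sum_univ_three]
  ring

/-- **Convexity of the radial projection of a convex spherical curve.**  Let `c` be a
unit-speed convex spherical curve (it lies in the closed hemisphere `⟪cross3 (c s) (T s), ·⟫ ≥ 0`
determined by each tangent great circle), and let `P = {x : ⟪ν, x⟫ = d}` (`d ≠ 0`) be an
affine plane not through the origin meeting every ray of the cone over `c`, so that
`Pc s = R s • c s ∈ P` with `R s = d / ⟪ν, c s⟫ > 0`.  Then `Pc` is a convex plane curve:
for each `s` it lies in a closed half-plane of `P` bounded by the tangent line at `Pc s`. -/
theorem cone_section_convex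
    (L : ℝ) (hL : 0 < L)
    (c T : ℝ → EuclideanSpace ℝ (Fin 3))
    (hsphere : ∀ s, ‖c s‖ = 1)
    (hc : ∀ s, HasDerivAt c (T s) s)
    (hunit : ∀ s, ‖T s‖ = 1)
    -- convexity of the spherical curve: closed-hemisphere condition
    (hconv : ∀ s ∈ Set.Icc 0 L, ∀ t ∈ Set.Icc 0 L, 0 ≤ ⟪cross3 (c s) (T s), c t⟫)
    (ν : EuclideanSpace ℝ (Fin 3)) (d : ℝ) (hd : d ≠ 0)
    (R : ℝ → ℝ) (Pc' : ℝ → EuclideanSpace ℝ (Fin 3))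
    -- the plane meets every ray of the cone positively
    (hR : ∀ s ∈ Set.Icc 0 L, 0 < R s ∧ R s * ⟪ν, c s⟫ = d)
    (hPc' : ∀ s ∈ Set.Icc 0 L, HasDerivAt (fun u => R u • c u) (Pc' s) s) :
    ∀ s ∈ Set.Icc 0 L,
      ∃ nvec : EuclideanSpace ℝ (Fin 3), nvec ≠ 0 ∧
        -- nvec is a direction within the plane P, normal to the tangent line at Pc s
        ⟪nvec, ν⟫ = 0 ∧ ⟪nvec, Pc' s⟫ = 0 ∧
        -- the curve lies in the corresponding closed half-plane
        ∀ t ∈ Set.Icc 0 L, 0 ≤ ⟪nvec, R t • c t - R s • c s⟫ := by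
  intro s hs
  set B := cross3 (c s) (T s) with hB
  -- basic inner products of the sphere curve
  have hcc : ∀ u, ⟪c u, c u⟫ = 1 := fun u => by
    rw [real_inner_self_eq_norm_sq, hsphere u]; norm_num
  have hcT : ⟪c s, T s⟫ = 0 := by
    have h1 : HasDerivAt (fun u => ⟪c u, c u⟫) (⟪c s, T s⟫ + ⟪T s, c s⟫) s :=
      (hc s).inner ℝ (hc s)
    have h2 : (fun u => ⟪c u, c u⟫) = fun _ : ℝ => (1 : ℝ) := funext fun u => hcc u
    rw [h2] at h1
    have h3 := h1.unique (hasDerivAt_const s 1)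
    have h4 := real_inner_comm (c s) (T s)
    linarith
  have hTT : ⟪T s, T s⟫ = 1 := by
    rw [real_inner_self_eq_norm_sq, hunit s]; norm_num
  have hBB : ⟪B, B⟫ = 1 := by
    rw [hB, cross3_lagrange, hcc, hTT, hcT]; norm_num
  have hBc : ⟪B, c s⟫ = 0 := cross3_inner_left _ _
  have hBT : ⟪B, T s⟫ = 0 := cross3_inner_right _ _
  -- data from the plane
  obtain ⟨hRs, hds⟩ := hR s hs
  have hνc : ⟪ν, c s⟫ ≠ 0 := by
    intro h; rw [h, mul_zero] at hds; exact hd hds.symm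
  have hνν : ⟪ν, ν⟫ ≠ 0 := by
    intro h
    have : ν = 0 := by
      have := inner_self_eq_zero (𝕜 := ℝ) (x := ν); tauto
    rw [this] at hνc; simp at hνc
  set lam : ℝ := ⟪B, ν⟫ / ⟪ν, ν⟫ with hlam
  refine ⟨B - lam • ν, ?_, ?_, ?_, ?_⟩
  · -- nonzero
    intro h
    have h0 : B = lam • ν := by
      have := sub_eq_zero.mp h; exact this
    have : ⟪B, c s⟫ = lam * ⟪ν, c s⟫ := by rw [h0, real_inner_smul_left]
    rw [hBc] at this
    have hlam0 : lam = 0 := by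
      rcases mul_eq_zero.mp this.symm with h | h
      · exact h
      · exact absurd h hνc
    rw [hlam0, zero_smul] at h0
    rw [h0] at hBB; simp at hBB
  · -- orthogonal to ν
    rw [inner_sub_left, real_inner_smul_left, hlam, div_mul_cancel₀ _ hνν, sub_self]
  · -- orthogonal to Pc' s
    -- differentiate R
    have hRder : HasDerivAt R (⟪c s, Pc' s⟫ + ⟪T s, R s • c s⟫) s := by
      have h1 : HasDerivAt (fun u => ⟪c u, R u • c u⟫)
          (⟪c s, Pc' s⟫ + ⟪T s, R s • c s⟫) s := (hc s).inner ℝ (hPc' s hs)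
      have h2 : (fun u => ⟪c u, R u • c u⟫) = R := funext fun u => by
        rw [real_inner_smul_right, hcc u, mul_one]
      rwa [h2] at h1
    set D := ⟪c s, Pc' s⟫ + ⟪T s, R s • c s⟫ with hD
    have hPcd : Pc' s = D • c s + R s • T s := by
      have := (hPc' s hs).unique (hRder.smul (hc s))
      rw [this]; abel
    -- ⟪ν, Pc' s⟫ = 0 from constancy of ⟪ν, Pc u⟫ on Icc
    have hνP : ⟪ν, Pc' s⟫ = 0 := by
      have h1 : HasDerivAt (fun u => ⟪ν, R u • c u⟫) (⟪ν, Pc' s⟫ + ⟪(0 : EuclideanSpace ℝ (Fin 3)), R s • c s⟫) s :=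
        (hasDerivAt_const s ν).inner ℝ (hPc' s hs)
      simp only [inner_zero_left, add_zero] at h1
      have hud : UniqueDiffWithinAt ℝ (Set.Icc 0 L) s := (uniqueDiffOn_Icc hL) s hs
      have h2 : HasDerivWithinAt (fun _ : ℝ => d) ⟪ν, Pc' s⟫ (Set.Icc 0 L) s := by
        refine (h1.hasDerivWithinAt).congr (fun u hu => ?_) ?_
        · rw [real_inner_smul_right]; exact ((hR u hu).2).symm
        · rw [real_inner_smul_right]; exact hds.symm
      have h3 : HasDerivWithinAt (fun _ : ℝ => d) 0 (Set.Icc 0 L) s :=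
        (hasDerivAt_const s d).hasDerivWithinAt
      exact (h2.derivWithin hud).symm.trans (h3.derivWithin hud)
    have hνP' : D * ⟪ν, c s⟫ + R s * ⟪ν, T s⟫ = 0 := by
      rw [hPcd, inner_add_right, real_inner_smul_right, real_inner_smul_right] at hνP
      exact hνP
    rw [hPcd, inner_sub_left, inner_add_right, real_inner_smul_right, real_inner_smul_right,
      inner_add_right (lam • ν), real_inner_smul_right, real_inner_smul_right,
      real_inner_smul_left, real_inner_smul_left, hBc, hBT]
    linear_combination (-lam) * hνP'
  · -- half-plane condition
    intro t ht
    obtain ⟨hRt, hdt⟩ := hR t ht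
    have key : ⟪B - lam • ν, R t • c t - R s • c s⟫ = R t * ⟪B, c t⟫ := by
      rw [inner_sub_left, inner_sub_right, inner_sub_right, real_inner_smul_right,
        real_inner_smul_right, real_inner_smul_right, real_inner_smul_right,
        real_inner_smul_left, real_inner_smul_left]
      rw [hBc]
      linear_combination lam * hds - lam * hdt
    rw [key]
    exact mul_nonneg hRt.le (hconv s hs t ht)
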